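/- arXiv:2510.22244 — 4 statements merged into one kernel-verified Lean document; each statement's English description precedes it below -/
import Mathlib

section
/- Let ν be a valuation on ℂ[z₁,…,zₙ] and let f₁,…,fₘ ∈ ℂ[z₁,…,zₙ] be polynomials with ν(fⱼ) > 0 for all j, whose common zero set is {0}. Then ν(zₗ) > 0 for every 1 ≤ ℓ ≤ n. -/
open MvPolynomial

/-!
By the Nullstellensatz some power `z_ℓ ^ k` lies in the ideal generated by the `f_j`. A valuation
is positive on every nonzero element of that ideal, since positivity of `ν` on the generators
survives sums (ultrametric inequality) and multiples (`ν ≥ 0`). Hence `k * ν(z_ℓ) = ν(z_ℓ ^ k) > 0`.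
-/

section Valuation

variable {R : Type*} (ν : R → ℝ)

theorem pos_of_mem_span [CommSemiring R] (hnn : ∀ f, 0 ≤ ν f)
    (hmul : ∀ f g, f ≠ 0 → g ≠ 0 → ν (f * g) = ν f + ν g)
    (hadd : ∀ f g, f ≠ 0 → g ≠ 0 → f + g ≠ 0 → min (ν f) (ν g) ≤ ν (f + g))
    {s : Set R} (hs : ∀ g ∈ s, 0 < ν g) {p : R} (hp : p ∈ Ideal.span s) (hp0 : p ≠ 0) :
    0 < ν p := by
  induction hp using Submodule.span_induction with
  | mem g hg => exact hs g hg
  | zero => exact absurd rfl hp0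
  | add a b _ _ ha hb =>
    rcases eq_or_ne a 0 with rfl | ha0
    · rw [zero_add] at hp0 ⊢; exact hb hp0
    rcases eq_or_ne b 0 with rfl | hb0
    · rw [add_zero] at hp0 ⊢; exact ha hp0
    exact (lt_min (ha ha0) (hb hb0)).trans_le (hadd a b ha0 hb0 hp0)
  | smul r a _ ha =>
    rw [smul_eq_mul] at hp0 ⊢
    rw [hmul r a (left_ne_zero_of_mul hp0) (right_ne_zero_of_mul hp0)]
    linarith [hnn r, ha (right_ne_zero_of_mul hp0)]

theorem map_pow_eq_mul [MonoidWithZero R] [NoZeroDivisors R] [Nontrivial R]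
    (hmul : ∀ f g, f ≠ 0 → g ≠ 0 → ν (f * g) = ν f + ν g) {x : R} (hx : x ≠ 0) (k : ℕ) :
    ν (x ^ k) = k * ν x := by
  induction k with
  | zero =>
    have h1 := hmul 1 1 one_ne_zero one_ne_zero
    rw [mul_one] at h1
    simp only [pow_zero, CharP.cast_eq_zero, zero_mul]
    linarith
  | succ k ih =>
    rw [pow_succ, hmul _ _ (pow_ne_zero _ hx) hx, ih]
    push_cast
    ring

end Valuation

theorem MvPolynomial.X_mem_radical_span_of_common_zeros_eq_zero {k σ ι : Type*} [Field k]
    [IsAlgClosed k] [Finite σ] (f : ι → MvPolynomial σ k)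
    (hzero : ∀ x : σ → k, (∀ j, eval x (f j) = 0) → x = 0) (i : σ) :
    X i ∈ (Ideal.span (Set.range f)).radical := by
  rw [← vanishingIdeal_zeroLocus_eq_radical (K := k), mem_vanishingIdeal_iff]
  intro x hx
  obtain rfl := hzero x fun j ↦ hx (f j) (Ideal.subset_span ⟨j, rfl⟩)
  simp

theorem stmt_2_general (n m : ℕ) (ν : MvPolynomial (Fin n) ℂ → ℝ)
    (hnn : ∀ f, 0 ≤ ν f)
    (hmul : ∀ f g, f ≠ 0 → g ≠ 0 → ν (f * g) = ν f + ν g)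
    (hadd : ∀ f g, f ≠ 0 → g ≠ 0 → f + g ≠ 0 → min (ν f) (ν g) ≤ ν (f + g))
    (f : Fin m → MvPolynomial (Fin n) ℂ)
    (hfpos : ∀ j, 0 < ν (f j))
    (hzero : ∀ x : Fin n → ℂ, (∀ j, eval x (f j) = 0) → x = 0) :
    ∀ l : Fin n, 0 < ν (X l) := by
  intro l
  obtain ⟨k, hk⟩ := X_mem_radical_span_of_common_zeros_eq_zero f hzero l
  have hpos : 0 < ν (X l ^ k) :=
    pos_of_mem_span ν hnn hmul hadd (by rintro _ ⟨j, rfl⟩; exact hfpos j) hk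
      (pow_ne_zero k (X_ne_zero l))
  rw [map_pow_eq_mul ν hmul (X_ne_zero l)] at hpos
  exact pos_of_mul_pos_right hpos k.cast_nonneg

/-- If ν is a valuation on ℂ[z₁,…,zₙ], the polynomials f₁,…,fₘ satisfy ν(fⱼ) > 0
and their common zero set is {0}, then ν(zₗ) > 0 for every ℓ. -/
theorem stmt_2 (n m : ℕ) (ν : MvPolynomial (Fin n) ℂ → ℝ)
    (hnn : ∀ f, 0 ≤ ν f)
    (hmul : ∀ f g, f ≠ 0 → g ≠ 0 → ν (f * g) = ν f + ν g)
    (hadd : ∀ f g, f ≠ 0 → g ≠ 0 → f + g ≠ 0 → min (ν f) (ν g) ≤ ν (f + g))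
    (hconst : ∀ c : ℂ, c ≠ 0 → ν (C c) = 0)
    (f : Fin m → MvPolynomial (Fin n) ℂ) (hf0 : ∀ j, f j ≠ 0)
    (hfpos : ∀ j, 0 < ν (f j))
    (hzero : ∀ x : Fin n → ℂ, (∀ j, eval x (f j) = 0) → x = 0) :
    ∀ l : Fin n, 0 < ν (X l) :=
  stmt_2_general n m ν hnn hmul hadd f hfpos hzero
end

section
/- Let T : ℝ → ℝ be a concave function, and let G : ℝ × ℝ → ℝ be a concave function such that t ↦ G(t,0), t ↦ G(0,t), and t ↦ G(t,t) are all differentiable at 0. Then the derivative at 0 of t ↦ G(t,t) equals the derivative at 0 of t ↦ G(t,0) plus the derivative at 0 of t ↦ G(0,t). -/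
/-!
Concavity gives `G (t • (u + v)) ≥ (G ((2 * t) • u) + G ((2 * t) • v)) / 2`, with equality at
`t = 0`. So the difference of the two sides has a minimum at `0`, and its derivative there,
the derivative along `u + v` minus those along `u` and `v`, vanishes.
-/

open Set

theorem HasDerivAt.comp_const_mul {f : ℝ → ℝ} {f' x : ℝ} (c : ℝ) (hf : HasDerivAt f f' (c * x)) :
    HasDerivAt (fun t => f (c * t)) (f' * c) x :=
  hf.comp x (hasDerivAt_const_mul c)

theorem ConcaveOn.midpoint_smul_le {E : Type*} [AddCommGroup E] [Module ℝ E] {G : E → ℝ}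
    (hG : ConcaveOn ℝ univ G) (u v : E) (t : ℝ) :
    (G ((2 * t) • u) + G ((2 * t) • v)) / 2 ≤ G (t • (u + v)) := by
  have hmid : (1 / 2 : ℝ) • (2 * t) • u + (1 / 2 : ℝ) • (2 * t) • v = t • (u + v) := by
    rw [smul_smul, smul_smul, ← smul_add]; congr 1; ring
  have := hG.2 (mem_univ ((2 * t) • u)) (mem_univ ((2 * t) • v)) (by norm_num : (0 : ℝ) ≤ 1 / 2)
    (by norm_num : (0 : ℝ) ≤ 1 / 2) (by norm_num)
  rw [hmid, smul_eq_mul, smul_eq_mul] at this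
  linarith

theorem ConcaveOn.hasDerivAt_smul_add_eq {E : Type*} [AddCommGroup E] [Module ℝ E] {G : E → ℝ}
    (hG : ConcaveOn ℝ univ G) {u v : E} {a b c : ℝ}
    (ha : HasDerivAt (fun t : ℝ => G (t • u)) a 0) (hb : HasDerivAt (fun t : ℝ => G (t • v)) b 0)
    (hc : HasDerivAt (fun t : ℝ => G (t • (u + v))) c 0) :
    c = a + b := by
  set gap : ℝ → ℝ := fun t => G (t • (u + v)) - (G ((2 * t) • u) + G ((2 * t) • v)) / 2
  have hgap : HasDerivAt gap (c - (a * 2 + b * 2) / 2) 0 :=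
    hc.sub ((((mul_zero (2 : ℝ)).symm ▸ ha).comp_const_mul 2 |>.add
      (((mul_zero (2 : ℝ)).symm ▸ hb).comp_const_mul 2)).div_const 2)
  have hmin : IsLocalMin gap 0 := by
    refine IsMinOn.isLocalMin (s := univ) (fun t _ => ?_) Filter.univ_mem
    simp only [mem_ofPred_eq, gap, mul_zero, zero_smul]
    linarith [hG.midpoint_smul_le u v t]
  linarith [hmin.hasDerivAt_eq_zero hgap]

theorem stmt_3_general
    (G : ℝ × ℝ → ℝ) (hG : ConcaveOn ℝ Set.univ G)
    (d₁ d₂ d₃ : ℝ)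
    (h₁ : HasDerivAt (fun t : ℝ => G (t, 0)) d₁ 0)
    (h₂ : HasDerivAt (fun t : ℝ => G (0, t)) d₂ 0)
    (h₃ : HasDerivAt (fun t : ℝ => G (t, t)) d₃ 0) :
    d₃ = d₁ + d₂ :=
  hG.hasDerivAt_smul_add_eq (u := (1, 0)) (v := (0, 1)) (by simpa using h₁) (by simpa using h₂)
    (by simpa using h₃)

/-- For a concave G : ℝ² → ℝ, if t ↦ G(t,0), t ↦ G(0,t) and t ↦ G(t,t) are
differentiable at 0, the derivative of the diagonal is the sum of the two partial
derivatives. -/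
theorem stmt_3 (T : ℝ → ℝ) (hT : ConcaveOn ℝ Set.univ T)
    (G : ℝ × ℝ → ℝ) (hG : ConcaveOn ℝ Set.univ G)
    (d₁ d₂ d₃ : ℝ)
    (h₁ : HasDerivAt (fun t : ℝ => G (t, 0)) d₁ 0)
    (h₂ : HasDerivAt (fun t : ℝ => G (0, t)) d₂ 0)
    (h₃ : HasDerivAt (fun t : ℝ => G (t, t)) d₃ 0) :
    d₃ = d₁ + d₂ :=
  stmt_3_general G hG d₁ d₂ d₃ h₁ h₂ h₃
end

section
/- Let fⱼ(x,y) = y − x − 2!x² − ⋯ − j!xʲ ∈ ℂ[[x,y]] for j ≥ 1. Then for any i ≠ j, dim_ℂ ℂ[[x,y]]/(fᵢ, fⱼ) = min{i,j} + 1. -/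
/-!
For `i < j` the difference `fᵢ - fⱼ` is `x^(i+1)` times a unit, so the ideal is
`(y - gᵢ(x), x^(i+1))` with `gᵢ = x + 2!x² + ⋯ + i!xⁱ = factorialPoly i`, and the quotient
should be `ℂ[x]/(x^(i+1))`. The map `ℂ[x] → ℂ[[x,y]]/(fᵢ, fⱼ)` is onto because every power
series is a polynomial modulo `(x^(i+1), y^(i+1))`, and `y^(i+1) = gᵢ(x)^(i+1)` lies in the
ideal. Its kernel is `(x^(i+1))`: the substitution `x ↦ x, y ↦ gᵢ(x)` into `ℂ[[x]]` kills `fᵢ`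
and sends `fⱼ` to `gᵢ - gⱼ ∈ (x^(i+1))`.
-/

open MvPowerSeries

/-- fⱼ(x,y) = y − x − 2!x² − ⋯ − j!xʲ ∈ ℂ[[x,y]]. -/
noncomputable def fseq (j : ℕ) : MvPowerSeries (Fin 2) ℂ :=
  X 1 - ∑ k ∈ Finset.Icc 1 j, ((C : ℂ →+* MvPowerSeries (Fin 2) ℂ) (k.factorial : ℂ)) * (X 0) ^ k

open scoped Polynomial PowerSeries

theorem Polynomial.aeval_powerSeriesX {R : Type*} [CommSemiring R] (p : R[X]) :
    aeval (PowerSeries.X : R⟦X⟧) p = p := by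
  simpa using aeval_algHom_apply (coeToPowerSeries.algHom (R := R) R) X p

section QuotientByPowerOfGenerator

variable {R A : Type*} [CommRing R] [CommRing A] [Algebra R A] {I : Ideal A} {x : A} {n : ℕ}

theorem ker_aeval_mk_eq_span_X_pow (hx : x ^ n ∈ I) (φ : A →ₐ[R] R⟦X⟧)
    (hφx : φ x = PowerSeries.X) (hφI : ∀ a ∈ I, PowerSeries.X ^ n ∣ φ a) :
    RingHom.ker (Polynomial.aeval (Ideal.Quotient.mkₐ R I x)) =
      Ideal.span {(Polynomial.X : R[X]) ^ n} := by
  refine le_antisymm (fun p hp => ?_) ?_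
  · rw [RingHom.mem_ker, Polynomial.aeval_algHom_apply, Ideal.Quotient.mkₐ_eq_mk,
      Ideal.Quotient.eq_zero_iff_mem] at hp
    have h := hφI _ hp
    rw [← Polynomial.aeval_algHom_apply, hφx, Polynomial.aeval_powerSeriesX,
      PowerSeries.X_pow_dvd_iff] at h
    rw [Ideal.mem_span_singleton, Polynomial.X_pow_dvd_iff]
    simpa using h
  · rw [Ideal.span_le, Set.singleton_subset_iff, SetLike.mem_coe, RingHom.mem_ker, map_pow,
      Polynomial.aeval_X, ← map_pow, Ideal.Quotient.mkₐ_eq_mk, Ideal.Quotient.eq_zero_iff_mem]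
    exact hx

theorem finrank_quotient_of_surjective_aeval_mk [Nontrivial R]
    (hsurj : Function.Surjective (Polynomial.aeval (R := R) (Ideal.Quotient.mkₐ R I x)))
    (hker : RingHom.ker (Polynomial.aeval (Ideal.Quotient.mkₐ R I x)) =
      Ideal.span {(Polynomial.X : R[X]) ^ n}) :
    Module.Finite R (A ⧸ I) ∧ Module.finrank R (A ⧸ I) = n := by
  let e : (R[X] ⧸ Ideal.span {(Polynomial.X : R[X]) ^ n}) ≃ₐ[R] A ⧸ I :=
    (Ideal.quotientEquivAlgOfEq R hker.symm).trans (Ideal.quotientKerAlgEquivOfSurjective hsurj)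
  have hmonic := Polynomial.monic_X_pow (R := R) n
  have := hmonic.finite_quotient
  refine ⟨Module.Finite.equiv e.toLinearEquiv, ?_⟩
  rw [← e.toLinearEquiv.finrank_eq, finrank_quotient_span_eq_natDegree' hmonic,
    Polynomial.natDegree_X_pow]

end QuotientByPowerOfGenerator

namespace MvPowerSeries

variable {R : Type*} [CommRing R]

theorem isUnit_polynomial_aeval_X {σ : Type*} {q : R[X]} (hq : IsUnit (q.coeff 0)) (s : σ) :
    IsUnit (Polynomial.aeval (X s : MvPowerSeries σ R) q) := by
  rw [isUnit_iff_constantCoeff, ← Polynomial.X_mul_divX_add q, map_add, map_mul,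
    Polynomial.aeval_X, Polynomial.aeval_C, map_add, map_mul, constantCoeff_X, zero_mul, zero_add,
    ← c_eq_algebraMap, constantCoeff_C]
  exact hq

theorem sub_trunc'_mem_span_X_pow (F : MvPowerSeries (Fin 2) R) (n : ℕ) :
    F - trunc' R (Finsupp.single 0 n + Finsupp.single 1 n) F ∈
      Ideal.span {X 0 ^ (n + 1), X 1 ^ (n + 1)} := by
  set G := F - (trunc' R (Finsupp.single 0 n + Finsupp.single 1 n) F : MvPowerSeries (Fin 2) R)
  have hG : ∀ m, m 0 ≤ n → m 1 ≤ n → coeff m G = 0 := fun m h₀ h₁ => by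
    simp [G, coeff_trunc', Finsupp.le_def, Fin.forall_fin_two, h₀, h₁]
  set G₀ : MvPowerSeries (Fin 2) R := fun m => if n < m 0 then coeff m G else 0
  obtain ⟨c₀, hc₀⟩ : X 0 ^ (n + 1) ∣ G₀ :=
    X_pow_dvd_iff.mpr fun m hm => if_neg (by omega)
  obtain ⟨c₁, hc₁⟩ : X 1 ^ (n + 1) ∣ G - G₀ := by
    refine X_pow_dvd_iff.mpr fun m hm => ?_
    show coeff m G - (if n < m 0 then coeff m G else 0) = 0
    split_ifs with h
    · exact sub_self _
    · rw [hG m (by omega) (by omega), sub_zero]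
  exact Ideal.mem_span_pair.mpr
    ⟨c₀, c₁, by rw [mul_comm, ← hc₀, mul_comm, ← hc₁, add_sub_cancel]⟩

theorem surjective_aeval_mk_X_zero {I : Ideal (MvPowerSeries (Fin 2) R)} {g : R[X]} {n : ℕ}
    (hg : Polynomial.X ∣ g) (hx : X 0 ^ (n + 1) ∈ I) (hy : X 1 - Polynomial.aeval (X 0) g ∈ I) :
    Function.Surjective (Polynomial.aeval (R := R) (Ideal.Quotient.mkₐ R I (X 0))) := by
  set π := Ideal.Quotient.mkₐ R I
  have hπy : π (X 1) = Polynomial.aeval (π (X 0)) g := by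
    rw [Polynomial.aeval_algHom_apply]
    exact Ideal.Quotient.eq.mpr hy
  have hy' : X 1 ^ (n + 1) ∈ I := by
    obtain ⟨h, rfl⟩ := hg
    rw [← Ideal.Quotient.eq_zero_iff_mem, ← Ideal.Quotient.mkₐ_eq_mk R, map_pow, hπy, map_mul,
      Polynomial.aeval_X, mul_pow, ← map_pow, Ideal.Quotient.mkₐ_eq_mk,
      Ideal.Quotient.eq_zero_iff_mem.mpr hx, zero_mul]
  have hcoe : π.comp (MvPolynomial.coeToMvPowerSeries.algHom R) =
      (Polynomial.aeval (π (X 0))).comp (MvPolynomial.aeval ![Polynomial.X, g]) :=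
    MvPolynomial.algHom_ext fun s => by fin_cases s <;> simp [hπy]
  intro F
  obtain ⟨F, rfl⟩ := Ideal.Quotient.mk_surjective F
  refine ⟨MvPolynomial.aeval ![Polynomial.X, g]
    (trunc' R (Finsupp.single 0 n + Finsupp.single 1 n) F), ?_⟩
  rw [← AlgHom.comp_apply, ← hcoe, AlgHom.comp_apply]
  refine (Ideal.Quotient.eq.mpr ?_).symm
  refine Ideal.span_le.mpr ?_ (sub_trunc'_mem_span_X_pow F n)
  simp [Set.insert_subset_iff, hx, hy']

end MvPowerSeries

noncomputable def factorialPoly (i : ℕ) : ℂ[X] :=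
  ∑ k ∈ Finset.Icc 1 i, Polynomial.C (k.factorial : ℂ) * Polynomial.X ^ k

theorem coeff_factorialPoly (i k : ℕ) :
    (factorialPoly i).coeff k = if k ∈ Finset.Icc 1 i then (k.factorial : ℂ) else 0 := by
  simp [factorialPoly]

theorem X_dvd_factorialPoly (i : ℕ) : Polynomial.X ∣ factorialPoly i := by
  simp [Polynomial.X_dvd_iff, coeff_factorialPoly]

theorem X_pow_dvd_factorialPoly_sub {i j : ℕ} (hij : i ≤ j) :
    Polynomial.X ^ (i + 1) ∣ factorialPoly j - factorialPoly i := by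
  rw [Polynomial.X_pow_dvd_iff]
  intro d hd
  simp only [Polynomial.coeff_sub, coeff_factorialPoly, Finset.mem_Icc]
  split_ifs <;> first | omega | simp

theorem coeff_factorialPoly_sub {i j : ℕ} (hij : i < j) :
    (factorialPoly j - factorialPoly i).coeff (i + 1) = ((i + 1).factorial : ℂ) := by
  simp only [Polynomial.coeff_sub, coeff_factorialPoly, Finset.mem_Icc]
  rw [if_pos (by omega), if_neg (by omega), sub_zero]

theorem fseq_eq_X_sub_aeval (i : ℕ) : fseq i = X 1 - Polynomial.aeval (X 0) (factorialPoly i) := by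
  simp [fseq, factorialPoly, map_sum, c_eq_algebraMap]

theorem X_zero_pow_mem_span_fseq {i j : ℕ} (hij : i < j) :
    X 0 ^ (i + 1) ∈ Ideal.span ({fseq i, fseq j} : Set (MvPowerSeries (Fin 2) ℂ)) := by
  obtain ⟨q, hq⟩ := X_pow_dvd_factorialPoly_sub hij.le
  have hq₀ : q.coeff 0 = ((i + 1).factorial : ℂ) := by
    rw [← coeff_factorialPoly_sub hij, hq, Polynomial.coeff_X_pow_mul', if_pos le_rfl,
      Nat.sub_self]
  have hunit : IsUnit (Polynomial.aeval (X 0 : MvPowerSeries (Fin 2) ℂ) q) :=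
    isUnit_polynomial_aeval_X
      (by rw [hq₀]; exact isUnit_iff_ne_zero.mpr (Nat.cast_ne_zero.mpr (Nat.factorial_ne_zero _)))
      0
  have hdiff : fseq i - fseq j = X 0 ^ (i + 1) * Polynomial.aeval (X 0) q := by
    rw [fseq_eq_X_sub_aeval, fseq_eq_X_sub_aeval, sub_sub_sub_cancel_left, ← map_sub, hq,
      map_mul, map_pow, Polynomial.aeval_X]
  rw [← Ideal.mul_unit_mem_iff_mem _ hunit, ← hdiff]
  exact Ideal.sub_mem _ (Ideal.subset_span (by simp)) (Ideal.subset_span (by simp))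

theorem finrank_quotient_span_fseq_of_lt {i j : ℕ} (hij : i < j) :
    Module.Finite ℂ (MvPowerSeries (Fin 2) ℂ ⧸
        Ideal.span ({fseq i, fseq j} : Set (MvPowerSeries (Fin 2) ℂ))) ∧
      Module.finrank ℂ (MvPowerSeries (Fin 2) ℂ ⧸
        Ideal.span ({fseq i, fseq j} : Set (MvPowerSeries (Fin 2) ℂ))) = i + 1 := by
  have hx := X_zero_pow_mem_span_fseq hij
  have ha : HasSubst ![(PowerSeries.X : ℂ⟦X⟧), (factorialPoly i : ℂ⟦X⟧)] :=
    hasSubst_of_constantCoeff_zero fun s => by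
      fin_cases s
      · exact PowerSeries.constantCoeff_X
      · show PowerSeries.constantCoeff (factorialPoly i : ℂ⟦X⟧) = 0
        rw [← PowerSeries.coeff_zero_eq_constantCoeff_apply, Polynomial.coeff_coe]
        exact Polynomial.X_dvd_iff.mp (X_dvd_factorialPoly i)
  let φ : MvPowerSeries (Fin 2) ℂ →ₐ[ℂ] ℂ⟦X⟧ := substAlgHom ha
  have hφX (s : Fin 2) : φ (X s) = ![PowerSeries.X, (factorialPoly i : ℂ⟦X⟧)] s :=
    substAlgHom_X ha s
  have hφf (k : ℕ) : φ (fseq k) = ((factorialPoly i - factorialPoly k : ℂ[X]) : ℂ⟦X⟧) := by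
    rw [fseq_eq_X_sub_aeval, map_sub, ← Polynomial.aeval_algHom_apply, hφX, hφX]
    simp [Polynomial.aeval_powerSeriesX]
  refine finrank_quotient_of_surjective_aeval_mk
    (surjective_aeval_mk_X_zero (X_dvd_factorialPoly i) hx ?_)
    (ker_aeval_mk_eq_span_X_pow hx φ (hφX 0) ?_)
  · rw [← fseq_eq_X_sub_aeval]
    exact Ideal.subset_span (by simp)
  · intro a ha
    obtain ⟨u, v, rfl⟩ := Ideal.mem_span_pair.mp ha
    rw [map_add, map_mul, map_mul, hφf, hφf, sub_self, Polynomial.coe_zero, mul_zero, zero_add]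
    refine Dvd.dvd.mul_left ?_ _
    simpa using map_dvd Polynomial.coeToPowerSeries.ringHom
      (dvd_sub_comm.mp (X_pow_dvd_factorialPoly_sub hij.le))

theorem stmt_12_general (i j : ℕ) (hij : i ≠ j) :
    FiniteDimensional ℂ
      (MvPowerSeries (Fin 2) ℂ ⧸
        Ideal.span ({fseq i, fseq j} : Set (MvPowerSeries (Fin 2) ℂ))) ∧
    Module.finrank ℂ
      (MvPowerSeries (Fin 2) ℂ ⧸
        Ideal.span ({fseq i, fseq j} : Set (MvPowerSeries (Fin 2) ℂ))) =
      min i j + 1 := by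
  rcases hij.lt_or_gt with h | h
  · rw [min_eq_left h.le]
    exact finrank_quotient_span_fseq_of_lt h
  · rw [Set.pair_comm, min_eq_right h.le]
    exact finrank_quotient_span_fseq_of_lt h

/-- For i ≠ j (both ≥ 1), dim_ℂ ℂ[[x,y]]/(fᵢ,fⱼ) = min{i,j} + 1. -/
theorem stmt_12 (i j : ℕ) (hi : 1 ≤ i) (hj : 1 ≤ j) (hij : i ≠ j) :
    FiniteDimensional ℂ
      (MvPowerSeries (Fin 2) ℂ ⧸
        Ideal.span ({fseq i, fseq j} : Set (MvPowerSeries (Fin 2) ℂ))) ∧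
    Module.finrank ℂ
      (MvPowerSeries (Fin 2) ℂ ⧸
        Ideal.span ({fseq i, fseq j} : Set (MvPowerSeries (Fin 2) ℂ))) =
      min i j + 1 :=
  stmt_12_general i j hij
end

section
/- Let ν₁, ν₂, ν₃, … be a sequence of valuations on a Noetherian ring R such that sup_j νⱼ(f) < ∞ for every nonzero f ∈ R. Then there exists a subsequence (ν_{j_l}) such that lim_{l→∞} ν_{j_l}(f) exists for every nonzero f ∈ R, and the limit ν₀(f) := lim_l ν_{j_l}(f) defines a map satisfying ν₀(fg) = ν₀(f) + ν₀(g) and ν₀(f+g) ≥ min{ν₀(f), ν₀(g)} whenever the relevant elements are nonzero. -/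
open Filter

namespace Stmt17Aux

variable {R : Type*} [CommRing R]

/-- The ideal of elements eventually belonging to a sequence of ideals. -/
def evIdeal (A : ℕ → Ideal R) : Ideal R where
  carrier := {f | ∀ᶠ m in atTop, f ∈ A m}
  add_mem' := fun hf hg => (hf.and hg).mono fun m h => (A m).add_mem h.1 h.2
  zero_mem' := Filter.Eventually.of_forall fun m => (A m).zero_mem
  smul_mem' := fun c f hf => hf.mono fun m h => (A m).smul_mem c h

lemma mem_evIdeal {A : ℕ → Ideal R} {f : R} :
    f ∈ evIdeal A ↔ ∀ᶠ m in atTop, f ∈ A m := Iff.rfl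

lemma evIdeal_le_comp {A : ℕ → Ideal R} {φ : ℕ → ℕ} (hφ : Tendsto φ atTop atTop) :
    evIdeal A ≤ evIdeal (fun l => A (φ l)) := fun _ hf => hφ.eventually hf

/-- A subsequence along which the eventual ideal is maximal. -/
lemma exists_max_subseq [IsNoetherianRing R] (A : ℕ → Ideal R) :
    ∃ ψ : ℕ → ℕ, StrictMono ψ ∧ ∀ ψ' : ℕ → ℕ, StrictMono ψ' →
      evIdeal (fun l => A (ψ (ψ' l))) ≤ evIdeal (fun l => A (ψ l)) := by
  set S : Set (Ideal R) := {I | ∃ ψ : ℕ → ℕ, StrictMono ψ ∧ evIdeal (fun l => A (ψ l)) = I}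
  obtain ⟨M, hMS, hMmax⟩ := (wellFounded_gt (α := Ideal R)).has_min S
    ⟨evIdeal (fun l => A (id l)), id, strictMono_id, rfl⟩
  obtain ⟨ψ, hψ, hψM⟩ := hMS
  refine ⟨ψ, hψ, fun ψ' hψ' => ?_⟩
  have h1 : evIdeal (fun l => A (ψ l)) ≤ evIdeal (fun l => A (ψ (ψ' l))) :=
    evIdeal_le_comp (hψ'.tendsto_atTop)
  have h2 : evIdeal (fun l => A (ψ (ψ' l))) ∈ S := ⟨ψ ∘ ψ', hψ.comp hψ', rfl⟩
  have hnot := hMmax _ h2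
  rw [hψM] at h1
  have heq : M = evIdeal (fun l => A (ψ (ψ' l))) := h1.lt_or_eq.resolve_left hnot
  rw [hψM, ← heq]

variable [IsNoetherianRing R]

noncomputable def nextSub (A : ℕ → Ideal R) : ℕ → ℕ := (exists_max_subseq A).choose

lemma nextSub_strictMono (A : ℕ → Ideal R) : StrictMono (nextSub A) :=
  (exists_max_subseq A).choose_spec.1

lemma nextSub_max (A : ℕ → Ideal R) : ∀ ψ' : ℕ → ℕ, StrictMono ψ' →
    evIdeal (fun l => A (nextSub A (ψ' l))) ≤ evIdeal (fun l => A (nextSub A l)) :=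
  (exists_max_subseq A).choose_spec.2

/-- The chain of nested subsequences, refining at level `m` so that the eventual
ideal of the `m`-th sequence of ideals is maximal. -/
noncomputable def chainSub (A : ℕ → ℕ → Ideal R) : ℕ → ℕ → ℕ
  | 0 => id
  | m + 1 => fun y => chainSub A m (nextSub (fun l => A m (chainSub A m l)) y)

lemma chainSub_strictMono (A : ℕ → ℕ → Ideal R) (m : ℕ) : StrictMono (chainSub A m) := by
  induction m with
  | zero => exact strictMono_id
  | succ m ih => exact ih.comp (nextSub_strictMono _)

lemma chainSub_max (A : ℕ → ℕ → Ideal R) (m : ℕ) : ∀ ψ' : ℕ → ℕ, StrictMono ψ' →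
    evIdeal (fun t => A m (chainSub A (m + 1) (ψ' t))) ≤
      evIdeal (fun t => A m (chainSub A (m + 1) t)) :=
  nextSub_max (fun l => A m (chainSub A m l))

lemma chainSub_comp (A : ℕ → ℕ → Ideal R) {b l : ℕ} (h : b ≤ l) :
    ∃ χ : ℕ → ℕ, StrictMono χ ∧ ∀ y, chainSub A l y = chainSub A b (χ y) := by
  induction l, h using Nat.le_induction with
  | base => exact ⟨id, strictMono_id, fun y => rfl⟩
  | succ l hbl ih =>
    obtain ⟨χ, hχ, hχe⟩ := ih
    exact ⟨χ ∘ nextSub (fun t => A l (chainSub A l t)),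
      hχ.comp (nextSub_strictMono _), fun y => hχe _⟩

/-- The diagonal subsequence. -/
noncomputable def diag (A : ℕ → ℕ → Ideal R) (m : ℕ) : ℕ := chainSub A m m

lemma diag_strictMono (A : ℕ → ℕ → Ideal R) : StrictMono (diag A) := by
  apply strictMono_nat_of_lt_succ
  intro m
  show chainSub A m m < chainSub A m (nextSub (fun l => A m (chainSub A m l)) (m + 1))
  exact (chainSub_strictMono A m) (lt_of_lt_of_le (Nat.lt_succ_self m)
    ((nextSub_strictMono _).le_apply))

lemma diag_eq (A : ℕ → ℕ → Ideal R) {b l : ℕ} (h : b ≤ l) :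
    ∃ x, l ≤ x ∧ diag A l = chainSub A b x := by
  obtain ⟨χ, hχ, hχe⟩ := chainSub_comp A h
  exact ⟨χ l, hχ.le_apply, hχe l⟩

/-- Key property: the eventual ideal along the diagonal is maximal at every level. -/
lemma diag_max (A : ℕ → ℕ → Ideal R) (m : ℕ) {φ' : ℕ → ℕ} (hφ' : StrictMono φ') :
    evIdeal (fun l => A m (diag A (φ' l))) ≤ evIdeal (fun l => A m (diag A l)) := by
  intro f hf
  rw [mem_evIdeal, eventually_atTop] at hf
  obtain ⟨N, hN⟩ := hf
  -- Step 1: f belongs to the maximal eventual ideal at level m.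
  have hfreq : ∃ᶠ x in atTop, f ∈ A m (chainSub A (m + 1) x) := by
    rw [frequently_atTop]
    intro c
    set l := max N (max (m + 1) c) with hl
    have h1 : m + 1 ≤ φ' l := le_trans (le_max_left _ _) (le_trans (le_max_right N _)
      hφ'.le_apply)
    obtain ⟨x, hx, hxe⟩ := diag_eq A h1
    refine ⟨x, ?_, ?_⟩
    · exact le_trans (le_trans (le_max_right _ _) (le_max_right N _))
        (le_trans hφ'.le_apply hx)
    · rw [← hxe]; exact hN l (le_max_left _ _)
  obtain ⟨ψ', hψ', hψ'mem⟩ := extraction_of_frequently_atTop hfreq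
  have hstep1 : f ∈ evIdeal (fun t => A m (chainSub A (m + 1) t)) :=
    chainSub_max A m ψ' hψ' (Filter.Eventually.of_forall hψ'mem)
  -- Step 2: the maximal eventual ideal is contained in the eventual ideal along the diagonal.
  rw [mem_evIdeal, eventually_atTop] at hstep1 ⊢
  obtain ⟨N', hN'⟩ := hstep1
  refine ⟨max N' (m + 1), fun l hl => ?_⟩
  obtain ⟨x, hx, hxe⟩ := diag_eq A (le_trans (le_max_right N' _) hl)
  rw [hxe]
  exact hN' x (le_trans (le_trans (le_max_left N' _) hl) hx)

/-- Threshold ideals of a valuation-like function. -/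
def thrIdeal (ν : R → ℝ) (hnn : ∀ f, 0 ≤ ν f)
    (hmul : ∀ f g : R, f ≠ 0 → g ≠ 0 → f * g ≠ 0 → ν (f * g) = ν f + ν g)
    (hadd : ∀ f g : R, f ≠ 0 → g ≠ 0 → f + g ≠ 0 → min (ν f) (ν g) ≤ ν (f + g))
    (q : ℝ) : Ideal R where
  carrier := {f | f = 0 ∨ q ≤ ν f}
  zero_mem' := Or.inl rfl
  add_mem' := by
    rintro f g (rfl | hf) (rfl | hg)
    · exact Or.inl (zero_add 0)
    · rw [zero_add]; exact Or.inr hg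
    · rw [add_zero]; exact Or.inr hf
    · rcases eq_or_ne f 0 with rfl | hf0
      · rw [zero_add]; exact Or.inr hg
      rcases eq_or_ne g 0 with rfl | hg0
      · rw [add_zero]; exact Or.inr hf
      rcases eq_or_ne (f + g) 0 with h0 | h0
      · exact Or.inl h0
      · exact Or.inr (le_trans (le_min hf hg) (hadd f g hf0 hg0 h0))
  smul_mem' := by
    rintro c f (rfl | hf)
    · exact Or.inl (smul_zero c)
    rcases eq_or_ne f 0 with rfl | hf0
    · exact Or.inl (smul_zero c)
    rcases eq_or_ne c 0 with rfl | hc0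
    · exact Or.inl (zero_smul R f)
    rcases eq_or_ne (c * f) 0 with h0 | h0
    · exact Or.inl h0
    · refine Or.inr ?_
      rw [smul_eq_mul, hmul c f hc0 hf0 h0]
      linarith [hnn c]

end Stmt17Aux

open Stmt17Aux Filter

/-- From a sequence of valuations on a Noetherian ring with pointwise bounded values,
one can extract a subsequence converging pointwise to a limit ν₀ satisfying the
valuation axioms. -/
theorem stmt_17 {R : Type*} [CommRing R] [IsNoetherianRing R]
    (ν : ℕ → R → ℝ)
    (hnn : ∀ j f, 0 ≤ ν j f)
    (hmul : ∀ (j : ℕ) (f g : R), f ≠ 0 → g ≠ 0 → f * g ≠ 0 →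
      ν j (f * g) = ν j f + ν j g)
    (hadd : ∀ (j : ℕ) (f g : R), f ≠ 0 → g ≠ 0 → f + g ≠ 0 →
      min (ν j f) (ν j g) ≤ ν j (f + g))
    (hunit : ∀ (j : ℕ) (u : Rˣ), ν j (u : R) = 0)
    (hbdd : ∀ f : R, f ≠ 0 → ∃ C : ℝ, ∀ j, ν j f ≤ C) :
    ∃ (φ : ℕ → ℕ) (ν₀ : R → ℝ), StrictMono φ ∧
      (∀ f : R, f ≠ 0 →
        Filter.Tendsto (fun l => ν (φ l) f) Filter.atTop (nhds (ν₀ f))) ∧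
      (∀ f g : R, f ≠ 0 → g ≠ 0 → f * g ≠ 0 → ν₀ (f * g) = ν₀ f + ν₀ g) ∧
      (∀ f g : R, f ≠ 0 → g ≠ 0 → f + g ≠ 0 → min (ν₀ f) (ν₀ g) ≤ ν₀ (f + g)) := by
  classical
  -- the family of threshold ideals, indexed by an enumeration of the rationals
  obtain ⟨e, he⟩ := exists_surjective_nat ℚ
  set A : ℕ → ℕ → Ideal R := fun m j =>
    thrIdeal (ν j) (hnn j) (hmul j) (hadd j) ((e m : ℚ) : ℝ) with hA
  set φ : ℕ → ℕ := diag A with hφ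
  set ν₀ : R → ℝ := fun f => limsup (fun l => ν (φ l) f) atTop with hν₀
  have hφmono : StrictMono φ := diag_strictMono A
  -- boundedness
  have hbddU : ∀ f : R, f ≠ 0 → IsBoundedUnder (· ≤ ·) atTop (fun l => ν (φ l) f) := by
    intro f hf
    obtain ⟨C, hC⟩ := hbdd f hf
    exact ⟨C, Filter.eventually_map.mpr (Filter.Eventually.of_forall fun l => hC _)⟩
  have hbddL : ∀ f : R, IsBoundedUnder (· ≥ ·) atTop (fun l => ν (φ l) f) :=
    fun f => ⟨0, Filter.eventually_map.mpr (Filter.Eventually.of_forall fun l => hnn _ f)⟩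
  have hcobL : ∀ f : R, IsCoboundedUnder (· ≤ ·) atTop (fun l => ν (φ l) f) :=
    fun f => (hbddL f).isCoboundedUnder_le
  have hcobG : ∀ f : R, f ≠ 0 → IsCoboundedUnder (· ≥ ·) atTop (fun l => ν (φ l) f) :=
    fun f hf => (hbddU f hf).isCoboundedUnder_ge
  -- pointwise convergence along the diagonal subsequence
  have hconv : ∀ f : R, f ≠ 0 →
      Tendsto (fun l => ν (φ l) f) atTop (nhds (ν₀ f)) := by
    intro f hf
    set u : ℕ → ℝ := fun l => ν (φ l) f with hu
    have hkey : limsup u atTop ≤ liminf u atTop := by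
      by_contra hlt
      push_neg at hlt
      obtain ⟨q, hq1, hq2⟩ := exists_rat_btwn hlt
      obtain ⟨m, hm⟩ := he q
      have hqm : ((e m : ℚ) : ℝ) = (q : ℝ) := by rw [hm]
      have hfreq : ∃ᶠ l in atTop, (q : ℝ) < u l :=
        frequently_lt_of_lt_limsup (hcobL f) hq2
      obtain ⟨ψ', hψ', hψ'mem⟩ := extraction_of_frequently_atTop hfreq
      have hmem : f ∈ evIdeal (fun l => A m (φ (ψ' l))) := by
        refine Filter.Eventually.of_forall fun l => Or.inr ?_
        rw [hqm]
        exact (hψ'mem l).le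
      have hmem2 : f ∈ evIdeal (fun l => A m (φ l)) := diag_max A m hψ' hmem
      have hev : ∀ᶠ l in atTop, (q : ℝ) ≤ u l := by
        refine hmem2.mono fun l hl => ?_
        rcases hl with h0 | h
        · exact absurd h0 hf
        · rw [← hqm]; exact h
      have : (q : ℝ) ≤ liminf u atTop := le_liminf_of_le (hcobG f hf) hev
      exact absurd (lt_of_le_of_lt this hq1) (lt_irrefl _)
    exact tendsto_of_le_liminf_of_limsup_le hkey le_rfl (hbddU f hf) (hbddL f)
  refine ⟨φ, ν₀, hφmono, hconv, ?_, ?_⟩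
  · intro f g hf hg hfg
    have h1 : Tendsto (fun l => ν (φ l) (f * g)) atTop (nhds (ν₀ (f * g))) := hconv _ hfg
    have h2 : Tendsto (fun l => ν (φ l) (f * g)) atTop (nhds (ν₀ f + ν₀ g)) := by
      have := (hconv f hf).add (hconv g hg)
      refine this.congr fun l => ?_
      exact (hmul (φ l) f g hf hg hfg).symm
    exact tendsto_nhds_unique h1 h2
  · intro f g hf hg hfg
    have h1 : Tendsto (fun l => min (ν (φ l) f) (ν (φ l) g)) atTop
        (nhds (min (ν₀ f) (ν₀ g))) := (hconv f hf).min (hconv g hg)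
    exact le_of_tendsto_of_tendsto' h1 (hconv _ hfg) fun l => hadd (φ l) f g hf hg hfg
end
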